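/- arXiv:2108.09903 — 8 statements merged into one kernel-verified Lean document; each statement's English description precedes it below -/
import Mathlib

section
/- Let n be a positive integer, P a symmetric idempotent real n×n matrix, Q = I − P, M a symmetric positive definite real n×n matrix, and μ > 0 a real scalar. Then the constraint inertia matrix M̄ = P M P + μ Q is symmetric positive definite (even when the underlying constraint matrix is rank deficient, i.e., for every orthogonal projection P). -/
/-!
Since `P` is a self-adjoint idempotent, so is `Q = 1 - P`, and
`P M P + μ Q = Pᴴ M P + Qᴴ (μ • 1) Q` is a sum of two congruences of positive definite matrices.
Such a sum is positive definite as soon as no nonzero `x` is killed by both `P` and `Q`,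
and `x = P x + Q x`.
-/

open Matrix

namespace Matrix

variable {l m n R : Type*} [Fintype l] [Fintype m] [Fintype n]
  [Ring R] [PartialOrder R] [StarRing R] [AddLeftMono R]

theorem PosDef.conjTranspose_mul_mul_add {A : Matrix l l R} {B : Matrix m m R}
    {C : Matrix l n R} {D : Matrix m n R}
    (hA : A.PosDef) (hB : B.PosDef) (hCD : ∀ x, C *ᵥ x = 0 → D *ᵥ x = 0 → x = 0) :
    (Cᴴ * A * C + Dᴴ * B * D).PosDef := by
  have hAC := hA.posSemidef.conjTranspose_mul_mul_same C
  have hBD := hB.posSemidef.conjTranspose_mul_mul_same D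
  refine PosDef.of_dotProduct_mulVec_pos (hAC.isHermitian.add hBD.isHermitian) fun x hx ↦ ?_
  rw [add_mulVec, dotProduct_add]
  by_cases hCx : C *ᵥ x = 0
  · have hDx : D *ᵥ x ≠ 0 := fun hDx ↦ hx (hCD x hCx hDx)
    refine add_pos_of_nonneg_of_pos (hAC.dotProduct_mulVec_nonneg x) ?_
    simpa only [star_mulVec, dotProduct_mulVec, vecMul_vecMul] using hB.dotProduct_mulVec_pos hDx
  · refine add_pos_of_pos_of_nonneg ?_ (hBD.dotProduct_mulVec_nonneg x)
    simpa only [star_mulVec, dotProduct_mulVec, vecMul_vecMul] using hA.dotProduct_mulVec_pos hCx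

end Matrix

theorem stmt_0_general (n : ℕ)
    (P M : Matrix (Fin n) (Fin n) ℝ)
    (hPsymm : Pᵀ = P) (hPidem : P * P = P)
    (hM : M.PosDef) (μ : ℝ) (hμ : 0 < μ) :
    (P * M * P + μ • ((1 : Matrix (Fin n) (Fin n) ℝ) - P)).PosDef := by
  have hP : IsStarProjection P :=
    ⟨hPidem, by rwa [IsSelfAdjoint, star_eq_conjTranspose, conjTranspose_eq_transpose_of_trivial]⟩
  have key := hM.conjTranspose_mul_mul_add (PosDef.one.smul hμ) (C := P) (D := 1 - P)
    fun x hPx hQx ↦ by simpa [sub_mulVec, hPx] using hQx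
  simpa only [Matrix.mul_smul, mul_one, smul_mul_assoc, ← star_eq_conjTranspose,
    hP.isSelfAdjoint.star_eq, hP.one_sub.isSelfAdjoint.star_eq, hP.one_sub.isIdempotentElem.eq]
    using key

/-- The constraint inertia matrix `M̄ = P M P + μ Q` with `Q = I - P` is symmetric
positive definite for every orthogonal projection `P`, symmetric positive definite `M`,
and `μ > 0`. -/
theorem stmt_0 (n : ℕ) (hn : 0 < n)
    (P M : Matrix (Fin n) (Fin n) ℝ)
    (hPsymm : Pᵀ = P) (hPidem : P * P = P)
    (hM : M.PosDef) (μ : ℝ) (hμ : 0 < μ) :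
    (P * M * P + μ • ((1 : Matrix (Fin n) (Fin n) ℝ) - P)).PosDef :=
  stmt_0_general n P M hPsymm hPidem hM μ hμ
end

section
/- Let P and M be symmetric real n×n matrices, let C, D, Λ be real n×n matrices such that D − 2C is skew-symmetric, and let μ be a real scalar. Define Ṗ := Λ P + P Λᵀ, Ṁ̄ := Ṗ M P + P D P + P M Ṗ − μ Ṗ, and C̄ := P C P + P M (Λ P + P Λᵀ) − μ Λ P. Then Ṁ̄ − 2 C̄ is skew-symmetric. -/
open Matrix

/-- Skew-symmetry of `Ṁ̄ - 2C̄` for the non-minimal order dynamics model: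
with `Ṗ = ΛP + PΛᵀ`, `Ṁ̄ = ṖMP + PDP + PMṖ - μṖ` (where `D` plays the role of `Ṁ`)
and `C̄ = PCP + PM(ΛP + PΛᵀ) - μΛP`, the matrix `Ṁ̄ - 2C̄` is skew-symmetric. -/
theorem stmt_1 (n : ℕ)
    (P M C D Λ : Matrix (Fin n) (Fin n) ℝ)
    (hPsymm : Pᵀ = P) (hMsymm : Mᵀ = M)
    (hDC : (D - (2 : ℝ) • C)ᵀ = -(D - (2 : ℝ) • C))
    (μ : ℝ)
    (Pdot Mbardot Cbar : Matrix (Fin n) (Fin n) ℝ)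
    (hPdot : Pdot = Λ * P + P * Λᵀ)
    (hMbardot : Mbardot = Pdot * M * P + P * D * P + P * M * Pdot - μ • Pdot)
    (hCbar : Cbar = P * C * P + P * M * (Λ * P + P * Λᵀ) - μ • (Λ * P)) :
    (Mbardot - (2 : ℝ) • Cbar)ᵀ = -(Mbardot - (2 : ℝ) • Cbar) := by
  have hPdotsymm : Pdotᵀ = Pdot := by
    rw [hPdot]
    simp [transpose_mul, hPsymm, add_comm]
  have hX : Mbardot - (2:ℝ) • Cbar =
      (Pdot * M * P - P * M * Pdot) + P * (D - (2:ℝ) • C) * P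
        + μ • (Λ * P - P * Λᵀ) := by
    subst hPdot hMbardot hCbar
    simp only [Matrix.mul_add, Matrix.add_mul, Matrix.mul_sub, Matrix.sub_mul,
      Matrix.smul_mul, Matrix.mul_smul, smul_sub, smul_add]
    module
  rw [hX]
  have h1 : (Pdot * M * P - P * M * Pdot)ᵀ = -(Pdot * M * P - P * M * Pdot) := by
    simp only [transpose_sub, transpose_mul, hPsymm, hMsymm, hPdotsymm, Matrix.mul_assoc]
    abel
  have h2 : (P * (D - (2:ℝ) • C) * P)ᵀ = -(P * (D - (2:ℝ) • C) * P) := by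
    rw [transpose_mul, transpose_mul, hPsymm, hDC]
    noncomm_ring
  have h3 : (μ • (Λ * P - P * Λᵀ))ᵀ = -(μ • (Λ * P - P * Λᵀ)) := by
    simp only [transpose_smul, transpose_sub, transpose_mul, hPsymm, transpose_transpose]
    rw [← smul_neg]
    congr 1
    abel
  rw [transpose_add, transpose_add, h1, h2, h3]
  abel
end

section
/- Let P be a symmetric idempotent real n×n matrix with P ≠ I, M a symmetric positive definite real n×n matrix, μ > 0, and M̄ = P M P + μ (I − P). Then the spectrum (set of real eigenvalues) of M̄ equals {μ} ∪ (spectrum of P M P \ {0}). -/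
/-!
With `Q = 1 - P` and `A = PMP` we have `QA = AQ = 0` and `Q² = Q`. Applying `Q` to
`(A + μQ) v = r v` gives `μ Qv = r Qv`, so either `r = μ` or `v = Pv`, and then `Av = rv`.
Conversely any `Qv ≠ 0` is a `μ`-eigenvector, and an eigenvector of `A` for `r ≠ 0` lies in the
range of `P`, where `A + μQ` acts as `A`. Finally `r = 0` is excluded on the range of `P`
because `vᵀ A v = (Pv)ᵀ M (Pv)` and `M` is positive definite, so `Av = 0` forces `Pv = 0`.
-/

open Matrix

namespace Matrix

theorem mem_spectrum_iff_exists_mulVec_eq_smul {K ι : Type*} [Field K] [Fintype ι]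
    [DecidableEq ι] (A : Matrix ι ι K) (r : K) :
    r ∈ spectrum K A ↔ ∃ v ≠ 0, A *ᵥ v = r • v := by
  rw [← spectrum_toLin', ← Module.End.hasEigenvalue_iff_mem_spectrum]
  constructor
  · intro h
    obtain ⟨v, hv⟩ := h.exists_hasEigenvector
    exact ⟨v, hv.2, by simpa using hv.apply_eq_smul⟩
  · rintro ⟨v, hv, h⟩
    exact Module.End.hasEigenvalue_of_hasEigenvector
      ⟨Module.End.mem_eigenspace_iff.2 (by simpa using h), hv⟩

theorem PosDef.conjTranspose_mul_mul_mulVec_eq_zero_iff {R ι κ : Type*} [CommRing R]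
    [PartialOrder R] [StarRing R] [Fintype ι] [Fintype κ] {M : Matrix ι ι R}
    (hM : M.PosDef) (B : Matrix ι κ R) (v : κ → R) :
    (Bᴴ * M * B) *ᵥ v = 0 ↔ B *ᵥ v = 0 := by
  refine ⟨fun h => ?_, fun h => by rw [← mulVec_mulVec, h, mulVec_zero]⟩
  by_contra hBv
  have hquad : star v ⬝ᵥ ((Bᴴ * M * B) *ᵥ v) = star (B *ᵥ v) ⬝ᵥ (M *ᵥ (B *ᵥ v)) := by
    rw [← mulVec_mulVec, ← mulVec_mulVec, dotProduct_mulVec, star_mulVec]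
  have := hM.dotProduct_mulVec_pos hBv
  rw [← hquad, h, dotProduct_zero] at this
  exact lt_irrefl 0 this

section Compression

variable {K ι : Type*} [Field K] [Fintype ι] [DecidableEq ι] {A P : Matrix ι ι K}

theorem mem_spectrum_add_smul_one_sub_self (hP : IsIdempotentElem P) (hAP : A * P = A)
    (hP1 : P ≠ 1) (μ : K) : μ ∈ spectrum K (A + μ • (1 - P)) := by
  obtain ⟨v, hv⟩ : ∃ v, (1 - P) *ᵥ v ≠ 0 := by
    by_contra! h
    exact hP1 (sub_eq_zero.1 (ext_iff_mulVec.2 fun v => by rw [h, zero_mulVec])).symm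
  have hAQ : A * (1 - P) = 0 := by rw [mul_sub, mul_one, hAP, sub_self]
  refine (mem_spectrum_iff_exists_mulVec_eq_smul _ _).2 ⟨(1 - P) *ᵥ v, hv, ?_⟩
  rw [add_mulVec, smul_mulVec, mulVec_mulVec, hAQ, zero_mulVec, zero_add, mulVec_mulVec,
    hP.one_sub.eq]

theorem mem_spectrum_add_smul_one_sub_of_mem_spectrum (hPA : P * A = A) (μ : K) {r : K}
    (hr : r ∈ spectrum K A) (hr0 : r ≠ 0) : r ∈ spectrum K (A + μ • (1 - P)) := by
  obtain ⟨v, hv, hAv⟩ := (mem_spectrum_iff_exists_mulVec_eq_smul _ _).1 hr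
  have hPv : P *ᵥ v = v := by
    refine smul_right_injective _ hr0 ?_
    simp only [← mulVec_smul, ← hAv, mulVec_mulVec, hPA]
  refine (mem_spectrum_iff_exists_mulVec_eq_smul _ _).2 ⟨v, hv, ?_⟩
  rw [add_mulVec, smul_mulVec, sub_mulVec, one_mulVec, hPv, sub_self, smul_zero, add_zero, hAv]

theorem spectrum_add_smul_one_sub_subset (hP : IsIdempotentElem P) (hPA : P * A = A)
    (hker : ∀ v, A *ᵥ v = 0 → P *ᵥ v = 0) (μ : K) :
    spectrum K (A + μ • (1 - P)) ⊆ {μ} ∪ (spectrum K A \ {0}) := by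
  intro r hr
  obtain ⟨v, hv, hev⟩ := (mem_spectrum_iff_exists_mulVec_eq_smul _ _).1 hr
  have hQA : (1 - P) * A = 0 := by rw [sub_mul, one_mul, hPA, sub_self]
  by_cases hQv : (1 - P) *ᵥ v = 0
  · have hAv : A *ᵥ v = r • v := by
      rwa [add_mulVec, smul_mulVec, hQv, smul_zero, add_zero] at hev
    have hPv : P *ᵥ v = v := by rwa [sub_mulVec, one_mulVec, sub_eq_zero, eq_comm] at hQv
    refine Or.inr ⟨(mem_spectrum_iff_exists_mulVec_eq_smul _ _).2 ⟨v, hv, hAv⟩, ?_⟩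
    rintro rfl
    exact hv (hPv ▸ hker v (by rw [hAv, zero_smul]))
  · have hQev : μ • ((1 - P) *ᵥ v) = r • ((1 - P) *ᵥ v) := by
      have := congrArg ((1 - P) *ᵥ ·) hev
      rwa [add_mulVec, smul_mulVec, mulVec_add, mulVec_smul, mulVec_smul, mulVec_mulVec,
        mulVec_mulVec, hQA, zero_mulVec, zero_add, hP.one_sub.eq] at this
    exact Or.inl (smul_left_injective K hQv hQev).symm

end Compression

end Matrix

theorem stmt_5_general (n : ℕ)
    (P M : Matrix (Fin n) (Fin n) ℝ)
    (hPsymm : Pᵀ = P) (hPidem : P * P = P) (hPne : P ≠ 1)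
    (hM : M.PosDef) (μ : ℝ) :
    spectrum ℝ (P * M * P + μ • ((1 : Matrix (Fin n) (Fin n) ℝ) - P)) =
      {μ} ∪ (spectrum ℝ (P * M * P) \ {0}) := by
  have hPA : P * (P * M * P) = P * M * P := by rw [← mul_assoc, ← mul_assoc, hPidem]
  have hAP : P * M * P * P = P * M * P := by rw [mul_assoc, hPidem]
  have hPstar : Pᴴ = P := by rw [conjTranspose_eq_transpose_of_trivial, hPsymm]
  have hker : ∀ v, (P * M * P) *ᵥ v = 0 → P *ᵥ v = 0 := fun v => by
    simpa only [hPstar] using (hM.conjTranspose_mul_mul_mulVec_eq_zero_iff P v).1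
  refine (spectrum_add_smul_one_sub_subset hPidem hPA hker μ).antisymm (Set.union_subset ?_ ?_)
  · exact Set.singleton_subset_iff.2 (mem_spectrum_add_smul_one_sub_self hPidem hAP hPne μ)
  · exact fun r hr => mem_spectrum_add_smul_one_sub_of_mem_spectrum hPA μ hr.1 hr.2

/-- The spectrum of the constraint inertia matrix `M̄ = PMP + μ(I - P)` (with `P ≠ I`)
is the union of `{μ}` and the nonzero part of the spectrum of `PMP`. -/
theorem stmt_5 (n : ℕ)
    (P M : Matrix (Fin n) (Fin n) ℝ)
    (hPsymm : Pᵀ = P) (hPidem : P * P = P) (hPne : P ≠ 1)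
    (hM : M.PosDef) (μ : ℝ) (hμ : 0 < μ) :
    spectrum ℝ (P * M * P + μ • ((1 : Matrix (Fin n) (Fin n) ℝ) - P)) =
      {μ} ∪ (spectrum ℝ (P * M * P) \ {0}) :=
  stmt_5_general n P M hPsymm hPidem hPne hM μ
end

section
/- Let A : ℝ → (m×n real matrices) and B : ℝ → (n×m real matrices) be differentiable functions such that at every time t, B(t) is the Moore–Penrose pseudoinverse of A(t), i.e., A B A = A, B A B = B, (A B)ᵀ = A B, (B A)ᵀ = B A. Define P(t) = I − B(t) A(t) and Λ(t) = −B(t) A'(t). Then the derivative of P satisfies P'(t) = Λ(t) P(t) + P(t) Λ(t)ᵀ for every t. -/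
open Matrix

/-!
Write `P = 1 - B A`. Because `A B A = A` and `B A` is symmetric, for every `s` the matrix `P s`
is a symmetric idempotent with `A s * P s = 0`. Differentiating these three identities, the
derivative `D` of `P` is symmetric, satisfies `D = D P + P D` and `A' P + A D = 0`. The first
Leibniz identity forces `D` to be off-diagonal with respect to `P`, i.e.
`D = (1 - P) D P + P D (1 - P)`, and the two off-diagonal blocks are each other's transposes.
Since `1 - P = B A`, the block `(1 - P) D P = B (A D) P = -B A' P` is `Λ P`.
-/

def HasEntrywiseDerivAt {ι κ : Type*} (M : ℝ → Matrix ι κ ℝ) (M' : Matrix ι κ ℝ) (t : ℝ) :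
    Prop :=
  ∀ i j, HasDerivAt (fun s => M s i j) (M' i j) t

namespace HasEntrywiseDerivAt

variable {ι κ μ : Type*} {t : ℝ}

theorem unique {M : ℝ → Matrix ι κ ℝ} {M₁ M₂ : Matrix ι κ ℝ}
    (h₁ : HasEntrywiseDerivAt M M₁ t) (h₂ : HasEntrywiseDerivAt M M₂ t) : M₁ = M₂ := by
  ext i j
  exact (h₁ i j).unique (h₂ i j)

theorem const (C : Matrix ι κ ℝ) : HasEntrywiseDerivAt (fun _ => C) 0 t :=
  fun _ _ => hasDerivAt_const t _

theorem const_sub {M : ℝ → Matrix ι κ ℝ} {M' : Matrix ι κ ℝ}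
    (h : HasEntrywiseDerivAt M M' t) (C : Matrix ι κ ℝ) :
    HasEntrywiseDerivAt (fun s => C - M s) (-M') t :=
  fun i j => (h i j).const_sub (C i j)

theorem transpose {M : ℝ → Matrix ι κ ℝ} {M' : Matrix ι κ ℝ}
    (h : HasEntrywiseDerivAt M M' t) : HasEntrywiseDerivAt (fun s => (M s)ᵀ) M'ᵀ t :=
  fun i j => h j i

theorem mul [Fintype κ] {M : ℝ → Matrix ι κ ℝ} {N : ℝ → Matrix κ μ ℝ} {M' : Matrix ι κ ℝ}
    {N' : Matrix κ μ ℝ} (hM : HasEntrywiseDerivAt M M' t) (hN : HasEntrywiseDerivAt N N' t) :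
    HasEntrywiseDerivAt (fun s => M s * N s) (M' * N t + M t * N') t := by
  intro i j
  simp only [Matrix.mul_apply, Matrix.add_apply, ← Finset.sum_add_distrib]
  exact HasDerivAt.fun_sum fun k _ => (hM i k).mul (hN k j)

end HasEntrywiseDerivAt

theorem IsIdempotentElem.eq_of_mul_add_mul_eq {R : Type*} [Ring R] {p d : R}
    (hp : IsIdempotentElem p) (hd : d * p + p * d = d) :
    d = (1 - p) * d * p + p * d * (1 - p) := by
  have hpdp : p * d * p = 0 := by
    have h := congrArg (p * ·) hd
    simp only [mul_add, ← mul_assoc, hp.eq] at h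
    simpa using h
  calc d = d * p + p * d := hd.symm
    _ = (1 - p) * d * p + p * d * (1 - p) := by
      simp only [sub_mul, mul_sub, one_mul, mul_one, hpdp]
      abel

theorem Matrix.eq_mul_add_mul_transpose_of_projection {m n : Type*} [Fintype m] [Fintype n]
    [DecidableEq n] {a a' : Matrix m n ℝ} {b : Matrix n m ℝ} {p d : Matrix n n ℝ}
    (hp : IsIdempotentElem p) (hpT : pᵀ = p) (hdT : dᵀ = d) (hba : b * a = 1 - p)
    (hd : d * p + p * d = d) (had : a' * p + a * d = 0) :
    d = -(b * a') * p + p * (-(b * a'))ᵀ := by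
  have hblock : (1 - p) * d * p = -(b * a') * p := by
    rw [← hba, Matrix.mul_assoc b, eq_neg_of_add_eq_zero_right had]
    simp only [Matrix.neg_mul, Matrix.mul_neg, Matrix.mul_assoc, hp.eq]
  have hsymm : ((1 - p) * d * p)ᵀ = p * d * (1 - p) := by
    rw [transpose_mul, transpose_mul, transpose_sub, transpose_one, hpT, hdT, Matrix.mul_assoc]
  calc d = (1 - p) * d * p + p * d * (1 - p) := hp.eq_of_mul_add_mul_eq hd
    _ = (1 - p) * d * p + ((1 - p) * d * p)ᵀ := by rw [hsymm]
    _ = -(b * a') * p + p * (-(b * a'))ᵀ := by rw [hblock, transpose_mul, hpT]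

theorem stmt_8_general (m n : ℕ)
    (A A' : ℝ → Matrix (Fin m) (Fin n) ℝ)
    (B B' : ℝ → Matrix (Fin n) (Fin m) ℝ)
    (hA : ∀ t i j, HasDerivAt (fun s => A s i j) (A' t i j) t)
    (hB : ∀ t i j, HasDerivAt (fun s => B s i j) (B' t i j) t)
    (h1 : ∀ t, A t * B t * A t = A t)
    (h4 : ∀ t, (B t * A t)ᵀ = B t * A t) :
    ∀ t i j, HasDerivAt (fun s => ((1 : Matrix (Fin n) (Fin n) ℝ) - B s * A s) i j)
      (((-(B t * A' t)) * ((1 : Matrix (Fin n) (Fin n) ℝ) - B t * A t) +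
        ((1 : Matrix (Fin n) (Fin n) ℝ) - B t * A t) * (-(B t * A' t))ᵀ) i j) t := by
  intro t
  set P : ℝ → Matrix (Fin n) (Fin n) ℝ := fun s => 1 - B s * A s
  have hP : HasEntrywiseDerivAt P _ t := (HasEntrywiseDerivAt.mul (hB t) (hA t)).const_sub 1
  have hPP (s : ℝ) : IsIdempotentElem (P s) := by
    refine IsIdempotentElem.one_sub ?_
    rw [IsIdempotentElem, Matrix.mul_assoc, ← Matrix.mul_assoc (A s), h1]
  have hPT (s : ℝ) : (P s)ᵀ = P s := by rw [transpose_sub, transpose_one, h4]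
  have hAP (s : ℝ) : A s * P s = 0 := by
    rw [Matrix.mul_sub, Matrix.mul_one, ← Matrix.mul_assoc, h1, sub_self]
  have hd := (hP.mul hP).unique (by simpa only [(hPP _).eq] using hP)
  have hdT := hP.transpose.unique (by simpa only [hPT] using hP)
  have h0 : HasEntrywiseDerivAt (fun _ => (0 : Matrix (Fin m) (Fin n) ℝ)) 0 t := .const 0
  have had := (HasEntrywiseDerivAt.mul (hA t) hP).unique (by simpa only [hAP] using h0)
  rwa [eq_mul_add_mul_transpose_of_projection (hPP t) (hPT t) hdT (sub_sub_cancel _ _).symm hd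
    had] at hP

/-- Time derivative of the orthogonal projection `P(t) = I - A⁺(t) A(t)` onto the null
space of a time-varying constraint matrix `A(t)`: with `Λ(t) = -A⁺(t) A'(t)`, one has
`P' = Λ P + P Λᵀ`.  Differentiability is stated entrywise. -/
theorem stmt_8 (m n : ℕ)
    (A A' : ℝ → Matrix (Fin m) (Fin n) ℝ)
    (B B' : ℝ → Matrix (Fin n) (Fin m) ℝ)
    (hA : ∀ t i j, HasDerivAt (fun s => A s i j) (A' t i j) t)
    (hB : ∀ t i j, HasDerivAt (fun s => B s i j) (B' t i j) t)
    (h1 : ∀ t, A t * B t * A t = A t)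
    (h2 : ∀ t, B t * A t * B t = B t)
    (h3 : ∀ t, (A t * B t)ᵀ = A t * B t)
    (h4 : ∀ t, (B t * A t)ᵀ = B t * A t) :
    ∀ t i j, HasDerivAt (fun s => ((1 : Matrix (Fin n) (Fin n) ℝ) - B s * A s) i j)
      (((-(B t * A' t)) * ((1 : Matrix (Fin n) (Fin n) ℝ) - B t * A t) +
        ((1 : Matrix (Fin n) (Fin n) ℝ) - B t * A t) * (-(B t * A' t))ᵀ) i j) t :=
  stmt_8_general m n A A' B B' hA hB h1 h4
end

section
/- Let P be a symmetric idempotent real n×n matrix and B a real n×k matrix such that Bᵀ P B is invertible and the column space (range) of P is contained in the column space of B. Then the oblique projection R = B (Bᵀ P B)⁻¹ Bᵀ P satisfies P R = P. -/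
open Matrix

/-- Under the actuation condition `range(P) ⊆ range(B)`, the oblique projection
`R = B (BᵀPB)⁻¹ Bᵀ P` satisfies `P R = P`. -/
theorem stmt_11 (n k : ℕ)
    (P : Matrix (Fin n) (Fin n) ℝ) (B : Matrix (Fin n) (Fin k) ℝ)
    (hPsymm : Pᵀ = P) (hPidem : P * P = P)
    (hinv : IsUnit (Bᵀ * P * B))
    (hrange : LinearMap.range P.mulVecLin ≤ LinearMap.range B.mulVecLin)
    (R : Matrix (Fin n) (Fin n) ℝ) (hR : R = B * (Bᵀ * P * B)⁻¹ * Bᵀ * P) :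
    P * R = P := by
  obtain ⟨C, hC⟩ : ∃ C : Matrix (Fin k) (Fin n) ℝ, B * C = P := by
    have h : ∀ j : Fin n, ∃ c : Fin k → ℝ, B.mulVec c = P.mulVec (Pi.single j 1) := by
      intro j
      obtain ⟨c, hc⟩ := hrange ⟨Pi.single j 1, rfl⟩
      exact ⟨c, hc⟩
    choose C hCc using h
    refine ⟨Matrix.of fun a j => C j a, ?_⟩
    ext i j
    have := congrFun (hCc j) i
    simpa [Matrix.mul_apply, Matrix.mulVec, dotProduct, Pi.single_apply,
      mul_comm, Finset.sum_ite_eq, Finset.sum_ite_eq'] using this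
  have hM : (Bᵀ * P * B) * (Bᵀ * P * B)⁻¹ = 1 :=
    Matrix.mul_nonsing_inv _ ((Matrix.isUnit_iff_isUnit_det _).mp hinv)
  have hP2 : Cᵀ * Bᵀ * P = P := by
    rw [← Matrix.transpose_mul, hC, hPsymm, hPidem]
  subst hR
  calc P * (B * (Bᵀ * P * B)⁻¹ * Bᵀ * P)
      = Cᵀ * Bᵀ * P * (B * (Bᵀ * P * B)⁻¹ * Bᵀ * P) := by rw [hP2]
    _ = Cᵀ * ((Bᵀ * P * B) * (Bᵀ * P * B)⁻¹) * (Bᵀ * P) := by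
        simp only [Matrix.mul_assoc]
    _ = Cᵀ * Bᵀ * P := by rw [hM, Matrix.mul_one, Matrix.mul_assoc]
    _ = P := hP2
end

section
/- Let P be a symmetric idempotent real n×n matrix, M a symmetric positive definite real n×n matrix, μ > 0, and M̄ = P M P + μ (I − P). Then M̄ is invertible and its inverse commutes with P: M̄⁻¹ P = P M̄⁻¹ (equivalently, M̄⁻¹ (I − P) = (I − P) M̄⁻¹). -/
/-!
With `Q = 1 - P` one has `M̄ = Pᴴ M P + Qᴴ (μ • 1) Q` and `P + Q = 1`, so a nonzero `x` has
`P x ≠ 0` or `Q x ≠ 0`, making one of the two nonnegative quadratic forms positive: `M̄` is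
positive definite, hence invertible. Since `P Q = Q P = 0`, `P` commutes with `M̄`, hence with
its inverse.
-/

open Matrix

theorem IsIdempotentElem.commute_mul_mul_add_smul_one_sub {R A : Type*} [CommSemiring R] [Ring A]
    [Algebra R A] {p : A} (hp : IsIdempotentElem p) (m : A) (μ : R) :
    Commute p (p * m * p + μ • (1 - p)) := by
  have hpmp : Commute p (p * m * p) := by
    rw [Commute, SemiconjBy, mul_assoc (p * m), hp.eq, ← mul_assoc, ← mul_assoc, hp.eq]
  exact hpmp.add_right (((Commute.one_right p).sub_right (.refl p)).smul_right μ)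

namespace Matrix

variable {n : Type*} [Fintype n] [DecidableEq n]

theorem commute_nonsing_inv_right {α : Type*} [CommRing α] {A B : Matrix n n α}
    (h : Commute A B) : Commute A B⁻¹ := by
  rw [nonsing_inv_eq_ringInverse]
  by_cases hB : IsUnit B
  · obtain ⟨u, rfl⟩ := hB
    rw [Ring.inverse_unit]
    exact h.units_inv_right
  · rw [Ring.inverse_non_unit _ hB]
    exact .zero_right A

variable {𝕜 : Type*} [RCLike 𝕜]

open scoped ComplexOrder

theorem posDef_conjTranspose_mul_mul_add {A B P Q : Matrix n n 𝕜} (hA : A.PosDef)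
    (hB : B.PosDef) (hPQ : P + Q = 1) : (Pᴴ * A * P + Qᴴ * B * Q).PosDef := by
  have quad {C : Matrix n n 𝕜} (R : Matrix n n 𝕜) (x : n → 𝕜) :
      star x ⬝ᵥ ((Rᴴ * C * R) *ᵥ x) = star (R *ᵥ x) ⬝ᵥ (C *ᵥ (R *ᵥ x)) := by
    simp only [star_mulVec, dotProduct_mulVec, vecMul_vecMul]
  refine .of_dotProduct_mulVec_pos
    ((hA.posSemidef.conjTranspose_mul_mul_same P).add
      (hB.posSemidef.conjTranspose_mul_mul_same Q)).isHermitian fun x hx => ?_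
  rw [add_mulVec, dotProduct_add, quad, quad]
  have hsplit : P *ᵥ x + Q *ᵥ x = x := by rw [← add_mulVec, hPQ, one_mulVec]
  by_cases hPx : P *ᵥ x = 0
  · have hQx : Q *ᵥ x ≠ 0 := fun hQx => hx (by rw [← hsplit, hPx, hQx, add_zero])
    exact add_pos_of_nonneg_of_pos (hA.posSemidef.dotProduct_mulVec_nonneg _)
      (hB.dotProduct_mulVec_pos hQx)
  · exact add_pos_of_pos_of_nonneg (hA.dotProduct_mulVec_pos hPx)
      (hB.posSemidef.dotProduct_mulVec_nonneg _)

theorem IsStarProjection.posDef_mul_mul_add_smul_one_sub {P M : Matrix n n 𝕜}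
    (hP : IsStarProjection P) (hM : M.PosDef) {μ : ℝ} (hμ : 0 < μ) :
    (P * M * P + μ • (1 - P)).PosDef := by
  have hQ := hP.one_sub
  have key : P * M * P + μ • (1 - P) = Pᴴ * M * P + (1 - P)ᴴ * (μ • 1) * (1 - P) := by
    rw [← star_eq_conjTranspose, ← star_eq_conjTranspose, hP.isSelfAdjoint.star_eq,
      hQ.isSelfAdjoint.star_eq, mul_smul_comm, mul_one, smul_mul_assoc, hQ.isIdempotentElem.eq]
  rw [key]
  exact posDef_conjTranspose_mul_mul_add hM (PosDef.one.smul hμ) (add_sub_cancel P 1)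

end Matrix

/-- The constraint inertia matrix `M̄ = PMP + μ(I - P)` is invertible and its inverse
commutes with the projection `P`. -/
theorem stmt_13 (n : ℕ)
    (P M : Matrix (Fin n) (Fin n) ℝ)
    (hPsymm : Pᵀ = P) (hPidem : P * P = P)
    (hM : M.PosDef) (μ : ℝ) (hμ : 0 < μ)
    (Mbar : Matrix (Fin n) (Fin n) ℝ)
    (hMbar : Mbar = P * M * P + μ • ((1 : Matrix (Fin n) (Fin n) ℝ) - P)) :
    IsUnit Mbar ∧ Mbar⁻¹ * P = P * Mbar⁻¹ := by
  have hP : IsStarProjection P := ⟨hPidem, by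
    rw [IsSelfAdjoint, star_eq_conjTranspose, conjTranspose_eq_transpose_of_trivial, hPsymm]⟩
  subst hMbar
  have hcomm := hP.isIdempotentElem.commute_mul_mul_add_smul_one_sub M μ
  exact ⟨(hP.posDef_mul_mul_add_smul_one_sub hM hμ).isUnit,
    (commute_nonsing_inv_right hcomm).eq.symm⟩
end

section
/- Let P be a symmetric idempotent real n×n matrix, M a symmetric positive definite real n×n matrix, μ > 0, M̄ = P M P + μ (I − P), Q = I − P, and S = I − M M̄⁻¹ P. Then Q S = S (equivalently P S = 0, so the range of S lies in the orthogonal complement of the range of P) and S Q = Q (so S maps every vector in the range of Q to itself). -/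
/-!
The quadratic form of `M̄ = P M P + μ Q` is `(P x)ᵀ M (P x) + μ ‖Q x‖²`, which vanishes only when
`P x = Q x = 0`, i.e. `x = 0`; so `M̄` is positive definite, hence invertible. Since
`P M̄ = M̄ P = P M P`, the inverse `M̄⁻¹` commutes with `P`, whence
`P M M̄⁻¹ P = P M P M̄⁻¹ = P M̄ M̄⁻¹ = P`, i.e. `P S = 0`, which gives `Q S = S`.
Finally `S Q = Q - M M̄⁻¹ P Q = Q` because `P Q = 0`.
-/

open Matrix ComplexOrder

theorem Matrix.star_dotProduct_conjTranspose_mul_mul_mulVec {R m n : Type*} [CommSemiring R]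
    [StarRing R] [Fintype m] [Fintype n] (A : Matrix m m R) (B : Matrix m n R) (x : n → R) :
    star x ⬝ᵥ ((Bᴴ * A * B) *ᵥ x) = star (B *ᵥ x) ⬝ᵥ (A *ᵥ (B *ᵥ x)) := by
  simp only [star_mulVec, dotProduct_mulVec, vecMul_vecMul, ← mulVec_mulVec]

theorem Matrix.PosDef.conjTranspose_mul_mul_add_conjTranspose_mul_mul
    {R m l n : Type*} [CommRing R] [PartialOrder R] [StarRing R] [IsOrderedCancelAddMonoid R]
    [Fintype m] [Fintype l] [Fintype n]
    {A : Matrix m m R} {B : Matrix l l R} (hA : A.PosDef) (hB : B.PosDef)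
    {P : Matrix m n R} {Q : Matrix l n R} (hPQ : ∀ x, P *ᵥ x = 0 → Q *ᵥ x = 0 → x = 0) :
    (Pᴴ * A * P + Qᴴ * B * Q).PosDef := by
  refine .of_dotProduct_mulVec_pos
    ((isHermitian_conjTranspose_mul_mul P hA.1).add (isHermitian_conjTranspose_mul_mul Q hB.1))
    fun x hx => ?_
  rw [add_mulVec, dotProduct_add, star_dotProduct_conjTranspose_mul_mul_mulVec,
    star_dotProduct_conjTranspose_mul_mul_mulVec]
  by_cases hPx : P *ᵥ x = 0
  · have hQx : Q *ᵥ x ≠ 0 := fun hQx => hx (hPQ x hPx hQx)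
    exact add_pos_of_nonneg_of_pos (hA.posSemidef.dotProduct_mulVec_nonneg _)
      (hB.dotProduct_mulVec_pos hQx)
  · exact add_pos_of_pos_of_nonneg (hA.dotProduct_mulVec_pos hPx)
      (hB.posSemidef.dotProduct_mulVec_nonneg _)

theorem Matrix.PosDef.mul_mul_add_smul_one_sub
    {𝕜 n : Type*} [RCLike 𝕜] [Fintype n] [DecidableEq n]
    {P M : Matrix n n 𝕜} (hP : IsStarProjection P) (hM : M.PosDef) {μ : ℝ} (hμ : 0 < μ) :
    (P * M * P + μ • (1 - P)).PosDef := by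
  have hPh : Pᴴ = P := hP.isSelfAdjoint
  have hQ := hP.one_sub
  have hQh : (1 - P)ᴴ = 1 - P := hQ.isSelfAdjoint
  have h := hM.conjTranspose_mul_mul_add_conjTranspose_mul_mul (PosDef.one.smul hμ)
    (P := P) (Q := 1 - P) fun x hPx hQx => by
      rwa [sub_mulVec, one_mulVec, hPx, sub_zero] at hQx
  rwa [hPh, hQh, mul_smul_comm, mul_one, smul_mul_assoc, hQ.isIdempotentElem.eq] at h

theorem IsIdempotentElem.mul_mul_add_smul_one_sub {𝕜 R : Type*} [CommSemiring 𝕜] [Ring R]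
    [Algebra 𝕜 R] {P : R} (hP : IsIdempotentElem P) (M : R) (c : 𝕜) :
    P * (P * M * P + c • (1 - P)) = P * M * P := by
  rw [mul_add, mul_smul_comm, hP.mul_one_sub_self, smul_zero, add_zero, ← mul_assoc, ← mul_assoc,
    hP.eq]

theorem IsIdempotentElem.mul_mul_add_smul_one_sub_mul {𝕜 R : Type*} [CommSemiring 𝕜] [Ring R]
    [Algebra 𝕜 R] {P : R} (hP : IsIdempotentElem P) (M : R) (c : 𝕜) :
    (P * M * P + c • (1 - P)) * P = P * M * P := by
  rw [add_mul, smul_mul_assoc, hP.one_sub_mul_self, smul_zero, add_zero, mul_assoc, hP.eq]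

theorem Units.mul_mul_inv_mul_eq_self {R : Type*} [Monoid R] {P M : R} {u : Rˣ}
    (hPu : P * u = P * M * P) (huP : u * P = P * M * P) : P * M * ↑u⁻¹ * P = P := by
  have hcomm : Commute P ↑u⁻¹ := Commute.units_inv_right (hPu.trans huP.symm)
  calc P * M * ↑u⁻¹ * P = P * M * P * ↑u⁻¹ := by rw [mul_assoc, ← hcomm.eq, ← mul_assoc]
    _ = P := by rw [← hPu, Units.mul_inv_cancel_right]

/-- With `Q = I - P` and `S = I - M M̄⁻¹ P`, one has `Q S = S` (so the range of `S` lies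
in the orthogonal complement of the range of `P`) and `S Q = Q` (so `S` maps every
vector in the range of `Q` to itself). -/
theorem stmt_15 (n : ℕ)
    (P M : Matrix (Fin n) (Fin n) ℝ)
    (hPsymm : Pᵀ = P) (hPidem : P * P = P)
    (hM : M.PosDef) (μ : ℝ) (hμ : 0 < μ)
    (Q Mbar S : Matrix (Fin n) (Fin n) ℝ)
    (hQ : Q = 1 - P)
    (hMbar : Mbar = P * M * P + μ • ((1 : Matrix (Fin n) (Fin n) ℝ) - P))
    (hS : S = 1 - M * Mbar⁻¹ * P) :
    Q * S = S ∧ S * Q = Q := by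
  have hP : IsStarProjection P := ⟨hPidem, hPsymm⟩
  have hPMbar : P * Mbar = P * M * P :=
    hMbar ▸ hP.isIdempotentElem.mul_mul_add_smul_one_sub M μ
  have hMbarP : Mbar * P = P * M * P :=
    hMbar ▸ hP.isIdempotentElem.mul_mul_add_smul_one_sub_mul M μ
  have hPMbarP : P * M * Mbar⁻¹ * P = P := by
    obtain ⟨u, rfl⟩ : IsUnit Mbar := hMbar ▸ (hM.mul_mul_add_smul_one_sub hP hμ).isUnit
    rw [← coe_units_inv]
    exact Units.mul_mul_inv_mul_eq_self hPMbar hMbarP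
  have hPS : P * S = 0 := by
    rw [hS, mul_sub, mul_one, ← mul_assoc, ← mul_assoc, hPMbarP, sub_self]
  subst hQ
  constructor
  · rw [sub_mul, one_mul, hPS, sub_zero]
  · rw [hS, sub_mul, one_mul, mul_assoc, hP.isIdempotentElem.mul_one_sub_self, mul_zero, sub_zero]
end

section
/- Let P be a symmetric idempotent real n×n matrix, M a symmetric positive definite real n×n matrix, μ > 0, M̄ = P M P + μ (I − P), S = I − M M̄⁻¹ P, and let Λ be a real n×n matrix with P Λ = 0 and Λᵀ P = 0. Suppose vectors v, a, f, f_g, f_c and a matrix C satisfy: P v = v, (I − P) a = (Λ P + P Λᵀ) v, P f_c = 0, and M a + C v = f_g + f_c + f. Then the generalized constraint force is given by f_c = −S (f + f_g − C v − M Λ v). -/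
/-!
Since `Λᵀ v = Λᵀ P v = 0`, the acceleration constraint says `a = P a + Λ v`, and the dynamics
become `M (P a) = w + f_c` with `w = f + f_g - C v - M Λ v`. On the range of `P` the matrix `M̄`
acts as `P M`, and `P f_c = 0`, so `M̄ (P a) = P w`. As `M̄` is positive definite,
`P a = M̄⁻¹ P w` and `f_c = M M̄⁻¹ P w - w = -S w`.
-/

open Matrix

section Projection

variable {ι : Type*} [Fintype ι] {P : Matrix ι ι ℝ}

lemma dotProduct_mul_mul_mulVec_of_transpose_eq (hPsymm : Pᵀ = P) (M : Matrix ι ι ℝ)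
    (x : ι → ℝ) : x ⬝ᵥ (P * M * P) *ᵥ x = (P *ᵥ x) ⬝ᵥ M *ᵥ (P *ᵥ x) := by
  rw [← mulVec_mulVec, ← mulVec_mulVec, dotProduct_mulVec, ← mulVec_transpose, hPsymm]

variable [DecidableEq ι]

theorem posDef_mul_mul_add_smul_one_sub (hPsymm : Pᵀ = P) (hPidem : P * P = P)
    {M : Matrix ι ι ℝ} (hM : M.PosDef) {μ : ℝ} (hμ : 0 < μ) :
    (P * M * P + μ • (1 - P)).PosDef := by
  set Q : Matrix ι ι ℝ := 1 - P
  have hQsymm : Qᵀ = Q := by simp [Q, hPsymm]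
  have hQidem : Q * Q = Q := by simp [Q, Matrix.mul_sub, Matrix.sub_mul, hPidem]
  have hMsymm : Mᵀ = M := hM.isHermitian.eq
  refine .of_dotProduct_mulVec_pos ?_ fun x hx => ?_
  · simp [IsHermitian, Matrix.transpose_mul, hPsymm, hQsymm, hMsymm, Matrix.mul_assoc]
  have hQ : x ⬝ᵥ Q *ᵥ x = (Q *ᵥ x) ⬝ᵥ (Q *ᵥ x) := by
    simpa [hQidem] using dotProduct_mul_mul_mulVec_of_transpose_eq hQsymm 1 x
  rw [star_trivial, add_mulVec, smul_mulVec, dotProduct_add, dotProduct_smul, smul_eq_mul,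
    dotProduct_mul_mul_mulVec_of_transpose_eq hPsymm, hQ]
  have hPM : 0 ≤ (P *ᵥ x) ⬝ᵥ M *ᵥ (P *ᵥ x) := by
    simpa using hM.posSemidef.dotProduct_mulVec_nonneg (P *ᵥ x)
  have hQQ : 0 ≤ (Q *ᵥ x) ⬝ᵥ (Q *ᵥ x) := by simpa using dotProduct_star_self_nonneg (Q *ᵥ x)
  by_cases hPx : P *ᵥ x = 0
  · have hQx : Q *ᵥ x ≠ 0 := by simpa [Q, sub_mulVec, hPx] using hx
    have : 0 < (Q *ᵥ x) ⬝ᵥ (Q *ᵥ x) := by simpa using dotProduct_star_self_pos_iff.2 hQx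
    positivity
  · have : 0 < (P *ᵥ x) ⬝ᵥ M *ᵥ (P *ᵥ x) := by simpa using hM.dotProduct_mulVec_pos hPx
    positivity

lemma mul_mul_add_smul_one_sub_mulVec_of_mulVec_eq (M : Matrix ι ι ℝ) (μ : ℝ) {y : ι → ℝ}
    (hy : P *ᵥ y = y) : (P * M * P + μ • (1 - P)) *ᵥ y = P *ᵥ M *ᵥ y := by
  rw [add_mulVec, smul_mulVec, sub_mulVec, one_mulVec, ← mulVec_mulVec, ← mulVec_mulVec, hy,
    sub_self, smul_zero, add_zero]

lemma eq_mulVec_add_mulVec_of_one_sub_mulVec_eq {Λ : Matrix ι ι ℝ} {v a : ι → ℝ}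
    (hv : P *ᵥ v = v) (hΛ : Λᵀ * P = 0)
    (hacc : (1 - P) *ᵥ a = (Λ * P + P * Λᵀ) *ᵥ v) : a = P *ᵥ a + Λ *ᵥ v := by
  have hΛv : Λᵀ *ᵥ v = 0 := by rw [← hv, mulVec_mulVec, hΛ, zero_mulVec]
  rw [sub_mulVec, one_mulVec, add_mulVec, ← mulVec_mulVec, ← mulVec_mulVec, hv, hΛv,
    mulVec_zero, add_zero] at hacc
  rw [← hacc, add_sub_cancel]

lemma eq_neg_one_sub_mul_inv_mul_mulVec {M Mbar : Matrix ι ι ℝ} (hMbar : IsUnit Mbar.det)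
    {y w f_c : ι → ℝ} (hMbary : Mbar *ᵥ y = P *ᵥ M *ᵥ y) (hMy : M *ᵥ y = w + f_c)
    (hfc : P *ᵥ f_c = 0) : f_c = -((1 - M * Mbar⁻¹ * P) *ᵥ w) := by
  have hPw : P *ᵥ w = Mbar *ᵥ y := by rw [hMbary, hMy, mulVec_add, hfc, add_zero]
  have hy : y = Mbar⁻¹ *ᵥ P *ᵥ w := by
    rw [hPw, mulVec_mulVec, nonsing_inv_mul _ hMbar, one_mulVec]
  calc f_c = M *ᵥ y - w := by rw [hMy, add_sub_cancel_left]
    _ = -((1 - M * Mbar⁻¹ * P) *ᵥ w) := by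
      rw [hy, sub_mulVec, one_mulVec, ← mulVec_mulVec, ← mulVec_mulVec, neg_sub]

end Projection

theorem stmt_19_general (n : ℕ)
    (P M : Matrix (Fin n) (Fin n) ℝ)
    (hPsymm : Pᵀ = P) (hPidem : P * P = P)
    (hM : M.PosDef) (μ : ℝ) (hμ : 0 < μ)
    (Mbar S Λ C : Matrix (Fin n) (Fin n) ℝ)
    (hMbar : Mbar = P * M * P + μ • ((1 : Matrix (Fin n) (Fin n) ℝ) - P))
    (hS : S = 1 - M * Mbar⁻¹ * P)
    (hΛ2 : Λᵀ * P = 0)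
    (v a f f_g f_c : Fin n → ℝ)
    (hv : P.mulVec v = v)
    (hacc : ((1 : Matrix (Fin n) (Fin n) ℝ) - P).mulVec a = (Λ * P + P * Λᵀ).mulVec v)
    (hfc : P.mulVec f_c = 0)
    (hdyn : M.mulVec a + C.mulVec v = f_g + f_c + f) :
    f_c = -(S.mulVec (f + f_g - C.mulVec v - (M * Λ).mulVec v)) := by
  have hMbar_det : IsUnit Mbar.det :=
    hMbar ▸ (posDef_mul_mul_add_smul_one_sub hPsymm hPidem hM hμ).det_pos.ne'.isUnit
  have ha := eq_mulVec_add_mulVec_of_one_sub_mulVec_eq hv hΛ2 hacc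
  have hPa : P *ᵥ (P *ᵥ a) = P *ᵥ a := by rw [mulVec_mulVec, hPidem]
  refine hS ▸ eq_neg_one_sub_mul_inv_mul_mulVec hMbar_det
    (hMbar ▸ mul_mul_add_smul_one_sub_mulVec_of_mulVec_eq M μ hPa) ?_ hfc
  rw [ha, mulVec_add] at hdyn
  rw [← mulVec_mulVec]
  linear_combination hdyn

/-- Closed-form generalized constraint force of the constrained system: under the
velocity constraint `P v = v`, the differentiated constraint
`(I - P) a = (ΛP + PΛᵀ) v`, the annihilation `P f_c = 0` and the dynamics
`M a + C v = f_g + f_c + f`, the constraint force is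
`f_c = -S (f + f_g - C v - M Λ v)`. -/
theorem stmt_19 (n : ℕ)
    (P M : Matrix (Fin n) (Fin n) ℝ)
    (hPsymm : Pᵀ = P) (hPidem : P * P = P)
    (hM : M.PosDef) (μ : ℝ) (hμ : 0 < μ)
    (Mbar S Λ C : Matrix (Fin n) (Fin n) ℝ)
    (hMbar : Mbar = P * M * P + μ • ((1 : Matrix (Fin n) (Fin n) ℝ) - P))
    (hS : S = 1 - M * Mbar⁻¹ * P)
    (hΛ1 : P * Λ = 0) (hΛ2 : Λᵀ * P = 0)
    (v a f f_g f_c : Fin n → ℝ)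
    (hv : P.mulVec v = v)
    (hacc : ((1 : Matrix (Fin n) (Fin n) ℝ) - P).mulVec a = (Λ * P + P * Λᵀ).mulVec v)
    (hfc : P.mulVec f_c = 0)
    (hdyn : M.mulVec a + C.mulVec v = f_g + f_c + f) :
    f_c = -(S.mulVec (f + f_g - C.mulVec v - (M * Λ).mulVec v)) :=
  stmt_19_general n P M hPsymm hPidem hM μ hμ Mbar S Λ C hMbar hS hΛ2 v a f f_g f_c hv hacc hfc hdyn
end
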